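/- arXiv:2302.02091 — 3 statements merged into one kernel-verified Lean document; each statement's English description precedes it below -/
import Mathlib

section
/- Necessity in Theorem 1(i): Let θ > 0, T ∈ ℕ with T ≥ 1, and let y ∈ ℝ be the common weighted input. Assume the SNN satisfies φ(T) = y − (v(T) − θ/2)/T (the conversion identity with initial potential v(0) = θ/2), φ(T) ∈ { θ·i/T : 0 ≤ i ≤ T }, and the ANN output is a = f(y) where f is the QCFS activation with L = T and λ = θ. If a = 0 and φ(T) > a, then v(T) < 0. -/
/-! If `f(y) = 0` then `yT < θ/2`, while a positive `φ(T)` is at least one quantum `θ/T`.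
By the conversion identity, `v(T) = θ/2 + yT - φ(T)T < θ/2 + θ/2 - θ = 0`. -/

/-- QCFS activation function. -/
noncomputable def qcfs (lam : ℝ) (L : ℕ) (y : ℝ) : ℝ :=
  lam * min (max ((1 / (L : ℝ)) * (⌊y * (L : ℝ) / lam + 1 / 2⌋ : ℝ)) 0) 1

theorem qcfs_pos {θ y : ℝ} {L : ℕ} (hθ : 0 < θ) (hL : 0 < (L : ℝ)) (hy : θ / 2 ≤ y * L) :
    0 < qcfs θ L y := by
  have hfloor : (1 : ℝ) ≤ ⌊y * L / θ + 1 / 2⌋ := by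
    have : 1 / 2 ≤ y * L / θ := by rw [le_div_iff₀ hθ]; linarith
    exact_mod_cast Int.le_floor.mpr (by push_cast; linarith)
  unfold qcfs
  refine mul_pos hθ (lt_min (lt_max_of_lt_left ?_) one_pos)
  exact mul_pos (one_div_pos.mpr hL) (by linarith)

theorem mul_lt_half_of_qcfs_eq_zero {θ y : ℝ} {L : ℕ} (hθ : 0 < θ) (hL : 0 < (L : ℝ))
    (h : qcfs θ L y = 0) : y * L < θ / 2 :=
  not_le.mp fun hy => (qcfs_pos hθ hL hy).ne' h

theorem div_le_mul_div_of_pos {θ : ℝ} {i T : ℕ} (hθ : 0 ≤ θ) (h : 0 < θ * i / T) :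
    θ / T ≤ θ * i / T := by
  have hi : (1 : ℝ) ≤ i := by
    rcases Nat.eq_zero_or_pos i with rfl | hi
    · simp at h
    · exact_mod_cast hi
  exact div_le_div_of_nonneg_right (le_mul_of_one_le_right hθ hi) (Nat.cast_nonneg T)

theorem necessity_case_zero (θ : ℝ) (T : ℕ) (y a φ vT : ℝ)
    (hθ : 0 < θ) (hT : 1 ≤ T)
    (hid : φ = y - (vT - θ / 2) / (T : ℝ))
    (hφ : ∃ i : ℕ, i ≤ T ∧ φ = θ * (i : ℝ) / (T : ℝ))
    (ha : a = qcfs θ T y) (ha0 : a = 0) (hgt : φ > a) :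
    vT < 0 := by
  have hT' : (0 : ℝ) < T := by exact_mod_cast hT
  have hy : y * T < θ / 2 := mul_lt_half_of_qcfs_eq_zero hθ hT' (ha.symm.trans ha0)
  obtain ⟨i, -, hφi⟩ := hφ
  have hquantum : θ / T ≤ φ := hφi ▸ div_le_mul_div_of_pos hθ.le (hφi ▸ ha0 ▸ hgt)
  have hvT : vT = θ / 2 + y * T - φ * T := by
    rw [hid]; field_simp; ring
  have hφT : θ ≤ φ * T := (div_le_iff₀ hT').mp hquantum
  linarith
end

section
/- Necessity in Theorem 1(ii): Let θ > 0, T ∈ ℕ with T ≥ 1, and y ∈ ℝ. Assume φ(T) = y − (v(T) − θ/2)/T, φ(T) ∈ { θ·i/T : 0 ≤ i ≤ T }, and a = f(y) = kθ/T for some natural number k with 0 < k < T (so y ∈ [ (θ/T)(k − 1/2), (θ/T)(k + 1/2) )). If φ(T) > a, then v(T) < 0. -/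
/-! Below saturation, rounding to the nearest grid point undershoots `y` by less than half a
step `θ / L`. Together with the spacing `θ / T` of the grid containing both `a` and `φ(T)`, this
gives `φ(T) - y > θ / (2T)`, which is exactly `v(T) < 0` once the residual potential is written as
`v(T) = θ / 2 - T (φ(T) - y)`. -/

theorem floor_mul_div_le_qcfs {θ : ℝ} {L : ℕ} {y : ℝ} (hθ : 0 < θ) (hL : 0 < L)
    (hsat : qcfs θ L y < θ) :
    θ * ⌊y * L / θ + 1 / 2⌋ / L ≤ qcfs θ L y := by
  set m := ⌊y * L / θ + 1 / 2⌋
  have hLr : (0 : ℝ) < L := by exact_mod_cast hL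
  have hmax_lt : max (1 / (L : ℝ) * m) 0 < 1 := by
    by_contra! h
    refine hsat.ne ?_
    simp only [qcfs, m] at h ⊢
    rw [min_eq_right h, mul_one]
  calc θ * m / L = θ * (1 / L * m) := by field_simp
    _ ≤ θ * max (1 / (L : ℝ) * m) 0 := by gcongr; exact le_max_left _ _
    _ = qcfs θ L y := by rw [qcfs, min_eq_left hmax_lt.le]

theorem lt_qcfs_add_half_step {θ : ℝ} {L : ℕ} {y : ℝ} (hθ : 0 < θ) (hL : 0 < L)
    (hsat : qcfs θ L y < θ) :
    y < qcfs θ L y + θ / (2 * L) := by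
  have hLr : (0 : ℝ) < L := by exact_mod_cast hL
  have hfloor := Int.lt_floor_add_one (y * L / θ + 1 / 2)
  have hq := floor_mul_div_le_qcfs hθ hL hsat
  calc y = θ * (y * L / θ) / L := by field_simp
    _ < θ * (⌊y * L / θ + 1 / 2⌋ + 1 / 2) / L := by gcongr; linarith
    _ = θ * ⌊y * L / θ + 1 / 2⌋ / L + θ / (2 * L) := by field_simp
    _ ≤ qcfs θ L y + θ / (2 * L) := by gcongr

theorem add_step_le_of_lt_of_grid {θ T : ℝ} {k i : ℕ} (hθ : 0 < θ) (hT : 0 < T)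
    (h : k * θ / T < θ * i / T) :
    k * θ / T + θ / T ≤ θ * i / T := by
  have hki : (k : ℝ) < i := by
    rw [div_lt_div_iff_of_pos_right hT, mul_comm] at h
    exact lt_of_mul_lt_mul_left h hθ.le
  have hki' : (k : ℝ) + 1 ≤ i := by exact_mod_cast (show k < i by exact_mod_cast hki)
  calc k * θ / T + θ / T = θ * (k + 1) / T := by ring
    _ ≤ θ * i / T := by gcongr

theorem necessity_case_mid_general (θ : ℝ) (T k : ℕ) (y a φ vT : ℝ)
    (hθ : 0 < θ) (hkT : k < T)
    (hid : φ = y - (vT - θ / 2) / (T : ℝ))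
    (hφ : ∃ i : ℕ, i ≤ T ∧ φ = θ * (i : ℝ) / (T : ℝ))
    (ha : a = qcfs θ T y) (hak : a = (k : ℝ) * θ / (T : ℝ))
    (hgt : φ > a) :
    vT < 0 := by
  obtain ⟨i, -, hφi⟩ := hφ
  have hT : 0 < T := Nat.zero_lt_of_lt hkT
  have hTr : (0 : ℝ) < T := by exact_mod_cast hT
  have hsat : qcfs θ T y < θ := by
    rw [← ha, hak, div_lt_iff₀ hTr, mul_comm θ]
    gcongr
  have hy : y < a + θ / (2 * T) := ha ▸ lt_qcfs_add_half_step hθ hT hsat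
  have hstep : a + θ / T ≤ φ := by
    rw [hφi, hak] at hgt ⊢
    exact add_step_le_of_lt_of_grid hθ hTr hgt
  have hvT : vT = θ / 2 - T * (φ - y) := by rw [hid]; field_simp; ring
  have hgap : θ / 2 < T * (φ - y) := by
    calc θ / 2 = T * (θ / T - θ / (2 * T)) := by field_simp; ring
      _ < T * (φ - y) := mul_lt_mul_of_pos_left (by linarith) hTr
  linarith

theorem necessity_case_mid (θ : ℝ) (T k : ℕ) (y a φ vT : ℝ)
    (hθ : 0 < θ) (hT : 1 ≤ T) (hk0 : 0 < k) (hkT : k < T)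
    (hid : φ = y - (vT - θ / 2) / (T : ℝ))
    (hφ : ∃ i : ℕ, i ≤ T ∧ φ = θ * (i : ℝ) / (T : ℝ))
    (ha : a = qcfs θ T y) (hak : a = (k : ℝ) * θ / (T : ℝ))
    (hgt : φ > a) :
    vT < 0 :=
  necessity_case_mid_general θ T k y a φ vT hθ hkT hid hφ ha hak hgt
end

section
/- Even-spike-timing closed form: Let θ > 0, T ∈ ℕ with T ≥ 1, and suppose the IF neuron receives constant input y per time-step, starts with v(0) = θ/2, never has its potential go below 0, and fires according to the floor rule. If 0 ≤ y < θ, then the number of spikes in T steps is ⌊(yT + θ/2)/θ⌋ when this quantity is at most T, i.e., φ(T) = clip( (θ/T)·⌊(yT + v(0))/θ⌋, 0, θ ). -/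
/-!
Reset by subtraction removes exactly `θ` per spike, so after `T` steps with `k` spikes
`v T = v 0 + y T - θ k`. Starting below threshold with `y < θ`, the potential stays below `θ`,
and it is nonnegative by assumption; hence `k = ⌊(y T + v 0) / θ⌋`. Since `k ≤ T`, the rate
`θ k / T` already lies in `[0, θ]`, so the clipping is inert.
-/

open Finset

namespace IFNeuron

theorem potential_eq_sub_spikes {θ y : ℝ} {s v : ℕ → ℝ}
    (hdyn : ∀ t : ℕ, 1 ≤ t → v t = v (t - 1) + y - θ * s t) (n : ℕ) :
    v n = v 0 + y * n - θ * ∑ t ∈ Icc 1 n, s t := by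
  induction n with
  | zero => simp
  | succ n ih =>
    rw [sum_Icc_succ_top (Nat.le_add_left 1 n), hdyn (n + 1) (Nat.le_add_left 1 n),
      Nat.add_sub_cancel, ih]
    push_cast
    ring

theorem potential_lt_threshold {θ y : ℝ} {s v : ℕ → ℝ}
    (hs : ∀ t : ℕ, 1 ≤ t → s t = if v (t - 1) + y ≥ θ then 1 else 0)
    (hdyn : ∀ t : ℕ, 1 ≤ t → v t = v (t - 1) + y - θ * s t)
    (hv0 : v 0 < θ) (hyθ : y < θ) (n : ℕ) : v n < θ := by
  induction n with
  | zero => exact hv0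
  | succ n ih =>
    rw [hdyn (n + 1) (Nat.le_add_left 1 n), hs (n + 1) (Nat.le_add_left 1 n),
      Nat.add_sub_cancel]
    split_ifs with hfire
    · linarith
    · linarith [not_le.mp hfire]

theorem exists_spike_count {θ y : ℝ} {s v : ℕ → ℝ}
    (hs : ∀ t : ℕ, 1 ≤ t → s t = if v (t - 1) + y ≥ θ then 1 else 0) (n : ℕ) :
    ∃ k : ℕ, k ≤ n ∧ ∑ t ∈ Icc 1 n, s t = k := by
  classical
  refine ⟨#{t ∈ Icc 1 n | v (t - 1) + y ≥ θ}, ?_, ?_⟩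
  · simpa using card_filter_le (Icc 1 n) (fun t => v (t - 1) + y ≥ θ)
  · rw [← sum_boole]
    exact sum_congr rfl fun t ht => hs t (mem_Icc.mp ht).1

end IFNeuron

theorem Int.floor_div_eq_of_sub_mul_mem_Ico {x θ : ℝ} {k : ℤ} (hθ : 0 < θ)
    (h₀ : 0 ≤ x - θ * k) (h₁ : x - θ * k < θ) : ⌊x / θ⌋ = k := by
  rw [Int.floor_eq_iff, le_div_iff₀ hθ, div_lt_iff₀ hθ]
  constructor <;> linarith

theorem min_max_div_mul_natCast_of_le {θ : ℝ} {k T : ℕ} (hθ : 0 ≤ θ) (hk : k ≤ T) :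
    min (max (θ / T * k) 0) θ = θ / T * k := by
  have hrate : θ / T * k = θ * (k / T) := by ring
  have hratio : (k : ℝ) / T ≤ 1 := div_le_one_of_le₀ (by exact_mod_cast hk) T.cast_nonneg
  rw [max_eq_left (by positivity), min_eq_left]
  exact hrate ▸ mul_le_of_le_one_right hθ hratio

theorem even_timing_closed_form_general (θ : ℝ) (T : ℕ) (y : ℝ) (s v : ℕ → ℝ)
    (hθ : 0 < θ)
    (hv0 : v 0 = θ / 2)
    (hs : ∀ t : ℕ, 1 ≤ t → s t = if v (t - 1) + y ≥ θ then 1 else 0)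
    (hdyn : ∀ t : ℕ, 1 ≤ t → v t = v (t - 1) + y - θ * s t)
    (hnonneg : ∀ t : ℕ, 0 ≤ v t)
    (hyθ : y < θ) :
    (θ / (T : ℝ)) * ∑ t ∈ Finset.Icc 1 T, s t
      = min (max ((θ / (T : ℝ)) * (⌊(y * (T : ℝ) + v 0) / θ⌋ : ℝ)) 0) θ := by
  obtain ⟨k, hkT, hcount⟩ := IFNeuron.exists_spike_count hs T
  have hvT := IFNeuron.potential_eq_sub_spikes hdyn T
  have hvT_lt := IFNeuron.potential_lt_threshold hs hdyn (by linarith) hyθ T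
  rw [hcount] at hvT
  have hfloor : ⌊(y * T + v 0) / θ⌋ = (k : ℤ) :=
    Int.floor_div_eq_of_sub_mul_mem_Ico hθ (by push_cast; linarith [hnonneg T])
      (by push_cast; linarith)
  rw [hcount, hfloor, Int.cast_natCast, min_max_div_mul_natCast_of_le hθ.le hkT]

theorem even_timing_closed_form (θ : ℝ) (T : ℕ) (y : ℝ) (s v : ℕ → ℝ)
    (hθ : 0 < θ) (hT : 1 ≤ T)
    (hv0 : v 0 = θ / 2)
    (hs : ∀ t : ℕ, 1 ≤ t → s t = if v (t - 1) + y ≥ θ then 1 else 0)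
    (hdyn : ∀ t : ℕ, 1 ≤ t → v t = v (t - 1) + y - θ * s t)
    (hnonneg : ∀ t : ℕ, 0 ≤ v t)
    (hy0 : 0 ≤ y) (hyθ : y < θ) :
    (θ / (T : ℝ)) * ∑ t ∈ Finset.Icc 1 T, s t
      = min (max ((θ / (T : ℝ)) * (⌊(y * (T : ℝ) + v 0) / θ⌋ : ℝ)) 0) θ :=
  even_timing_closed_form_general θ T y s v hθ hv0 hs hdyn hnonneg hyθ
end
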